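/- Let A be a finite d-regular λ-expander and f : A → {0,1} a function with |E_a[(−1)^{f(a)}]| ≤ √λ. For k ≥ 1 define h_k(a) = E over k-step random walks (a_1,…,a_k) starting at a_1 = a of (−1)^{f(a_1)⊕⋯⊕f(a_k)}, and let ε_k = |E_a[h_k(a)]|. Then ε_k ≤ (1/2)·(4λ)^{k/2} for all k ≥ 1. -/
import Mathlib


open Finset

noncomputable def expec {V : Type*} [Fintype V] (f : V → ℝ) : ℝ :=
  (∑ a, f a) / (Fintype.card V : ℝ)

noncomputable def sdev {V : Type*} [Fintype V] (f : V → ℝ) : ℝ :=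
  Real.sqrt (expec (fun a => f a ^ 2) - (expec f) ^ 2)

noncomputable def edgeE {V : Type*} [Fintype V] {d : ℕ} (N : V → Fin d → V)
    (F : V → V → ℝ) : ℝ :=
  (∑ a, ∑ i, F a (N a i)) / ((Fintype.card V : ℝ) * d)

/-- `A` is a `lam`-expander in the mixing-lemma sense. -/
def IsExpander {V : Type*} [Fintype V] {d : ℕ} (N : V → Fin d → V) (lam : ℝ) : Prop :=
  ∀ f g : V → ℝ,
    |edgeE N (fun a a' => f a * g a') - expec f * expec g| ≤ lam * sdev f * sdev g

/-- The graph given by the rotation map `N` is undirected (the edge multiset is symmetric). -/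
def SymmGraph {V : Type*} [Fintype V] {d : ℕ} (N : V → Fin d → V) : Prop :=
  ∀ F : V → V → ℝ, (∑ a, ∑ i, F a (N a i)) = ∑ a, ∑ i, F (N a i) a

noncomputable def hWalk {V : Type*} {d : ℕ} (N : V → Fin d → V) (f : V → Bool) :
    ℕ → V → ℝ
  | 0, _ => 1
  | k + 1, a => (if f a then (-1 : ℝ) else 1) * ((∑ i, hWalk N f k (N a i)) / d)

section Aux

variable {V : Type*} [Fintype V] [Nonempty V] {d : ℕ}

lemma aux_card_pos : (0:ℝ) < (Fintype.card V : ℝ) := by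
  exact_mod_cast Fintype.card_pos

lemma aux_abs_expec_le (f : V → ℝ) {C : ℝ} (h : ∀ a, |f a| ≤ C) : |expec f| ≤ C := by
  have hc : (0:ℝ) < (Fintype.card V : ℝ) := aux_card_pos
  rw [expec, abs_div, abs_of_pos hc, div_le_iff₀ hc]
  calc |∑ a, f a| ≤ ∑ a, |f a| := Finset.abs_sum_le_sum_abs _ _
    _ ≤ ∑ _a : V, C := Finset.sum_le_sum (fun a _ => h a)
    _ = (Fintype.card V : ℝ) * C := by rw [Finset.sum_const, card_univ, nsmul_eq_mul]
    _ = C * (Fintype.card V : ℝ) := mul_comm _ _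

lemma aux_var_nonneg (f : V → ℝ) : 0 ≤ expec (fun a => f a ^ 2) - (expec f) ^ 2 := by
  have hc : (0:ℝ) < (Fintype.card V : ℝ) := aux_card_pos
  rw [expec, expec, sub_nonneg, div_pow, div_le_div_iff₀ (by positivity) hc]
  have h := sq_sum_le_card_mul_sum_sq (s := (univ : Finset V)) (f := f)
  rw [card_univ] at h
  have : (∑ a, f a) ^ 2 * (Fintype.card V : ℝ) ≤
      ((Fintype.card V : ℝ) * ∑ a, f a ^ 2) * (Fintype.card V : ℝ) := by
    apply mul_le_mul_of_nonneg_right _ hc.le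
    exact_mod_cast h
  calc (∑ a, f a) ^ 2 * (Fintype.card V : ℝ)
      ≤ ((Fintype.card V : ℝ) * ∑ a, f a ^ 2) * (Fintype.card V : ℝ) := this
    _ = (∑ a, f a ^ 2) * ((Fintype.card V : ℝ)) ^ 2 := by ring

lemma aux_sq_sdev (f : V → ℝ) : sdev f ^ 2 = expec (fun a => f a ^ 2) - (expec f) ^ 2 :=
  Real.sq_sqrt (aux_var_nonneg f)

lemma aux_sdev_nonneg (f : V → ℝ) : 0 ≤ sdev f := Real.sqrt_nonneg _

lemma aux_sdev_le_one (f : V → ℝ) (h : ∀ a, |f a| ≤ 1) : sdev f ≤ 1 := by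
  have h1 : expec (fun a => f a ^ 2) ≤ 1 := by
    have h2 := aux_abs_expec_le (fun a => f a ^ 2) (C := 1) (fun a => by
      have := h a
      have h0 := abs_nonneg (f a)
      show |f a ^ 2| ≤ 1
      rw [abs_of_nonneg (sq_nonneg _)]
      nlinarith [sq_abs (f a)])
    linarith [(abs_le.mp h2).2]
  have h3 : expec (fun a => f a ^ 2) - (expec f) ^ 2 ≤ 1 := by nlinarith [sq_nonneg (expec f)]
  calc sdev f = Real.sqrt (expec (fun a => f a ^ 2) - (expec f) ^ 2) := rfl
    _ ≤ Real.sqrt 1 := Real.sqrt_le_sqrt h3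
    _ = 1 := Real.sqrt_one

/-- The walk (averaging) operator. -/
noncomputable def Mop (N : V → Fin d → V) (g : V → ℝ) : V → ℝ :=
  fun a => (∑ i, g (N a i)) / d

lemma aux_expec_Mop (hd : 0 < d) (N : V → Fin d → V) (hsymm : SymmGraph N) (g : V → ℝ) :
    expec (Mop N g) = expec g := by
  have hd' : (d : ℝ) ≠ 0 := by positivity
  have hds : ∑ a, ∑ i : Fin d, g (N a i) = (d : ℝ) * ∑ a, g a := by
    rw [hsymm (fun _ a' => g a')]
    simp [Finset.sum_const, Finset.mul_sum]
  unfold expec Mop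
  rw [← Finset.sum_div, hds]
  field_simp

lemma aux_edgeE_eq (hd : 0 < d) (N : V → Fin d → V) (f g : V → ℝ) :
    edgeE N (fun a a' => f a * g a') = expec (fun a => f a * Mop N g a) := by
  have hd' : (d : ℝ) ≠ 0 := by positivity
  unfold edgeE expec Mop
  simp only [← Finset.mul_sum, ← mul_div_assoc]
  rw [← Finset.sum_div, div_div, mul_comm ((Fintype.card V : ℝ)) (d : ℝ)]

lemma aux_sdev_Mop (hd : 0 < d) (N : V → Fin d → V) {lam : ℝ} (hlam : 0 ≤ lam)
    (hexp : IsExpander N lam) (hsymm : SymmGraph N) (g : V → ℝ) :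
    sdev (Mop N g) ≤ lam * sdev g := by
  have h1 := hexp (Mop N g) g
  rw [aux_edgeE_eq hd N _ g, aux_expec_Mop hd N hsymm g] at h1
  have h2 : expec (fun a => Mop N g a * Mop N g a) = expec (fun a => Mop N g a ^ 2) := by
    congr 1; funext a; ring
  rw [h2] at h1
  have h3 : sdev (Mop N g) ^ 2 ≤ lam * sdev (Mop N g) * sdev g := by
    rw [aux_sq_sdev, aux_expec_Mop hd N hsymm g]
    calc expec (fun a => Mop N g a ^ 2) - expec g ^ 2
        = expec (fun a => Mop N g a ^ 2) - expec g * expec g := by ring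
      _ ≤ |expec (fun a => Mop N g a ^ 2) - expec g * expec g| := le_abs_self _
      _ ≤ lam * sdev (Mop N g) * sdev g := h1
  rcases eq_or_lt_of_le (aux_sdev_nonneg (Mop N g)) with h | h
  · rw [← h]; exact mul_nonneg hlam (aux_sdev_nonneg g)
  · nlinarith [aux_sdev_nonneg g]

end Aux

/-- Bias of the XOR of f along a k-step random walk in a lam-expander:
ε_k ≤ (1/2)·(4lam)^{k/2}. -/
theorem stmt2 {V : Type*} [Fintype V] [Nonempty V] {d : ℕ} (hd : 0 < d)
    (N : V → Fin d → V) (lam : ℝ) (hlam : 0 ≤ lam)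
    (hexp : IsExpander N lam) (hsymm : SymmGraph N)
    (f : V → Bool)
    (hbias : |expec (fun a => if f a then (-1 : ℝ) else 1)| ≤ Real.sqrt lam) :
    ∀ k : ℕ, 1 ≤ k →
      |expec (hWalk N f k)| ≤ (1 / 2) * (4 * lam) ^ ((k : ℝ) / 2) := by
  have hd' : (d : ℝ) ≠ 0 := by positivity
  set χ : V → ℝ := fun a => if f a then (-1 : ℝ) else 1 with hχ
  have hχabs : ∀ a, |χ a| ≤ 1 := by
    intro a; by_cases h : f a <;> simp [hχ, h]
  have hχsq : ∀ a, χ a ^ 2 = 1 := by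
    intro a; by_cases h : f a <;> simp [hχ, h]
  -- |hWalk| ≤ 1
  have hwabs : ∀ k a, |hWalk N f k a| ≤ 1 := by
    intro k
    induction k with
    | zero => intro a; simp [hWalk]
    | succ k ih =>
      intro a
      have havg : |(∑ i : Fin d, hWalk N f k (N a i)) / d| ≤ 1 := by
        rw [abs_div, Nat.abs_cast, div_le_one (by exact_mod_cast hd)]
        calc |∑ i : Fin d, hWalk N f k (N a i)| ≤ ∑ i : Fin d, |hWalk N f k (N a i)| :=
              Finset.abs_sum_le_sum_abs _ _
          _ ≤ ∑ _i : Fin d, (1:ℝ) := Finset.sum_le_sum (fun i _ => ih _)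
          _ = d := by simp
      show |χ a * ((∑ i : Fin d, hWalk N f k (N a i)) / d)| ≤ 1
      rw [abs_mul]
      exact mul_le_one₀ (hχabs a) (abs_nonneg _) havg
  -- unfolding of hWalk via Mop
  have hstep : ∀ k, hWalk N f (k+1) = fun a => χ a * Mop N (hWalk N f k) a := by
    intro k; rfl
  -- recursion (A)
  have hA : ∀ k, |expec (hWalk N f (k+1))| ≤
      Real.sqrt lam * |expec (hWalk N f k)| + lam * sdev (hWalk N f k) := by
    intro k
    have h1 := hexp χ (hWalk N f k)
    rw [aux_edgeE_eq hd N χ (hWalk N f k)] at h1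
    have h2 : expec (fun a => χ a * Mop N (hWalk N f k) a) = expec (hWalk N f (k+1)) := by
      rw [hstep k]
    rw [h2] at h1
    have hsχ : sdev χ ≤ 1 := aux_sdev_le_one χ hχabs
    have hsk := aux_sdev_nonneg (hWalk N f k)
    have h3 : |expec (hWalk N f (k+1))| ≤ |expec χ * expec (hWalk N f k)| +
        lam * sdev χ * sdev (hWalk N f k) := by
      calc |expec (hWalk N f (k+1))|
          ≤ |expec (hWalk N f (k+1)) - expec χ * expec (hWalk N f k)| +
            |expec χ * expec (hWalk N f k)| := by
              have := abs_sub_abs_le_abs_sub (expec (hWalk N f (k+1)))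
                (expec χ * expec (hWalk N f k))
              linarith [abs_sub_abs_le_abs_sub (expec (hWalk N f (k+1)))
                (expec χ * expec (hWalk N f k))]
        _ ≤ lam * sdev χ * sdev (hWalk N f k) + |expec χ * expec (hWalk N f k)| := by
              linarith [h1]
        _ = _ := by ring
    have h4 : |expec χ * expec (hWalk N f k)| ≤ Real.sqrt lam * |expec (hWalk N f k)| := by
      rw [abs_mul]
      exact mul_le_mul_of_nonneg_right hbias (abs_nonneg _)
    have h5 : lam * sdev χ * sdev (hWalk N f k) ≤ lam * sdev (hWalk N f k) := by
      have h6 := mul_le_mul_of_nonneg_right hsχ hsk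
      calc lam * sdev χ * sdev (hWalk N f k) = lam * (sdev χ * sdev (hWalk N f k)) := by ring
        _ ≤ lam * (1 * sdev (hWalk N f k)) := mul_le_mul_of_nonneg_left h6 hlam
        _ = lam * sdev (hWalk N f k) := by ring
    linarith
  -- recursion (B)
  have hB : ∀ k, sdev (hWalk N f (k+1)) ≤
      lam * sdev (hWalk N f k) + |expec (hWalk N f k)| := by
    intro k
    set g := hWalk N f k with hg
    have hsq : (fun a => hWalk N f (k+1) a ^ 2) = (fun a => Mop N g a ^ 2) := by
      funext a
      show (χ a * Mop N g a) ^ 2 = Mop N g a ^ 2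
      rw [mul_pow, hχsq a, one_mul]
    have hMle : sdev (Mop N g) ≤ lam * sdev g := aux_sdev_Mop hd N hlam hexp hsymm g
    have hvar : sdev (hWalk N f (k+1)) ^ 2 ≤ (lam * sdev g + |expec g|) ^ 2 := by
      rw [aux_sq_sdev]
      have e1 : expec (fun a => hWalk N f (k+1) a ^ 2) = expec (fun a => Mop N g a ^ 2) := by
        rw [hsq]
      have e2 : expec (fun a => Mop N g a ^ 2) = sdev (Mop N g) ^ 2 + (expec g) ^ 2 := by
        rw [aux_sq_sdev, aux_expec_Mop hd N hsymm g]; ring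
      have h6 : sdev (Mop N g) ^ 2 ≤ (lam * sdev g) ^ 2 := by
        have := aux_sdev_nonneg (Mop N g)
        nlinarith
      have h7 : (expec g) ^ 2 ≤ |expec g| ^ 2 := by rw [sq_abs]
      have h8 : 0 ≤ lam * sdev g := mul_nonneg hlam (aux_sdev_nonneg g)
      nlinarith [sq_nonneg (expec (hWalk N f (k+1))), abs_nonneg (expec g),
        mul_nonneg h8 (abs_nonneg (expec g)), e1, e2]
    have hrhs : 0 ≤ lam * sdev g + |expec g| :=
      add_nonneg (mul_nonneg hlam (aux_sdev_nonneg g)) (abs_nonneg _)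
    nlinarith [aux_sdev_nonneg (hWalk N f (k+1))]
  -- base case: hWalk 1 = χ
  have hw1 : hWalk N f 1 = χ := by
    funext a
    show χ a * ((∑ _i : Fin d, (1:ℝ)) / d) = χ a
    rw [Finset.sum_const]
    simp [hd']
  intro k hk
  rcases le_or_gt lam 1 with hl1 | hl1
  · -- lam ≤ 1 : induction
    set s : ℝ := 2 * Real.sqrt lam with hs
    have hs0 : 0 ≤ s := by positivity
    have hssq : s ^ 2 = 4 * lam := by
      rw [hs, mul_pow, Real.sq_sqrt hlam]; ring
    have hsl : Real.sqrt lam ≤ 1 := by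
      rw [show (1:ℝ) = Real.sqrt 1 by rw [Real.sqrt_one]]
      exact Real.sqrt_le_sqrt hl1
    have hlsl : lam ≤ Real.sqrt lam := by
      nlinarith [Real.sq_sqrt hlam, Real.sqrt_nonneg lam]
    have main : ∀ m : ℕ, |expec (hWalk N f (m+1))| ≤ (1/2) * s ^ (m+1) ∧
        sdev (hWalk N f (m+1)) ≤ s ^ m := by
      intro m
      induction m with
      | zero =>
        constructor
        · rw [hw1]; rw [pow_one]
          calc |expec χ| ≤ Real.sqrt lam := hbias
            _ = (1/2) * s := by rw [hs]; ring
        · rw [hw1, pow_zero]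
          exact aux_sdev_le_one χ hχabs
      | succ m ih =>
        obtain ⟨ihε, ihσ⟩ := ih
        constructor
        · calc |expec (hWalk N f (m+2))|
              ≤ Real.sqrt lam * |expec (hWalk N f (m+1))| + lam * sdev (hWalk N f (m+1)) :=
                hA (m+1)
            _ ≤ Real.sqrt lam * ((1/2) * s ^ (m+1)) + lam * s ^ m := by
                have h1 : Real.sqrt lam * |expec (hWalk N f (m+1))| ≤
                    Real.sqrt lam * ((1/2) * s ^ (m+1)) :=
                  mul_le_mul_of_nonneg_left ihε (Real.sqrt_nonneg lam)
                have h2 : lam * sdev (hWalk N f (m+1)) ≤ lam * s ^ m :=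
                  mul_le_mul_of_nonneg_left ihσ hlam
                linarith
            _ = (1/2) * s ^ (m+2) := by
                have hls : Real.sqrt lam * s = 2 * lam := by
                  rw [hs]; nlinarith [Real.sq_sqrt hlam]
                calc Real.sqrt lam * ((1/2) * s ^ (m+1)) + lam * s ^ m
                    = (1/2) * s ^ m * (Real.sqrt lam * s) + lam * s ^ m := by ring
                  _ = (1/2) * s ^ m * (2 * lam) + lam * s ^ m := by rw [hls]
                  _ = (1/2) * (s ^ m * (4 * lam)) := by ring
                  _ = (1/2) * (s ^ m * s ^ 2) := by rw [hssq]
                  _ = (1/2) * s ^ (m+2) := by ring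
        · calc sdev (hWalk N f (m+2))
              ≤ lam * sdev (hWalk N f (m+1)) + |expec (hWalk N f (m+1))| := hB (m+1)
            _ ≤ lam * s ^ m + (1/2) * s ^ (m+1) := by
                have h2 : lam * sdev (hWalk N f (m+1)) ≤ lam * s ^ m :=
                  mul_le_mul_of_nonneg_left ihσ hlam
                linarith
            _ ≤ s ^ (m+1) := by
                have hs1 : s ^ (m+1) = s ^ m * s := by ring
                have hpm : 0 ≤ s ^ m := pow_nonneg hs0 m
                rw [hs1, hs]
                nlinarith [mul_le_mul_of_nonneg_left hlsl hpm]
    obtain ⟨m, rfl⟩ : ∃ m, k = m + 1 := ⟨k - 1, by omega⟩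
    have hfin := (main m).1
    have hrpow : (4 * lam) ^ (((m+1 : ℕ) : ℝ) / 2) = s ^ (m+1) := by
      have h4 : (0:ℝ) ≤ 4 * lam := by linarith
      have : (((m+1:ℕ)) : ℝ) / 2 = (1/2 : ℝ) * ((m+1:ℕ) : ℝ) := by ring
      rw [this, Real.rpow_mul h4, Real.rpow_natCast]
      congr 1
      rw [← Real.sqrt_eq_rpow, hs]
      rw [show (4:ℝ) * lam = 2^2 * lam by norm_num, Real.sqrt_mul (by positivity),
        Real.sqrt_sq (by norm_num : (0:ℝ) ≤ 2)]
    rw [hrpow]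
    exact hfin
  · -- lam > 1 : trivial bound
    have h1 : |expec (hWalk N f k)| ≤ 1 := aux_abs_expec_le _ (hwabs k)
    have h2 : (2:ℝ) ≤ (4 * lam) ^ ((k:ℝ) / 2) := by
      have hb : (4:ℝ) ≤ 4 * lam := by linarith
      have hb1 : (1:ℝ) ≤ (4:ℝ) := by norm_num
      have he : (1:ℝ)/2 ≤ (k:ℝ)/2 := by
        have : (1:ℝ) ≤ (k:ℝ) := by exact_mod_cast hk
        linarith
      calc (2:ℝ) = (4:ℝ) ^ ((1:ℝ)/2) := by
            rw [← Real.sqrt_eq_rpow, show (4:ℝ) = 2^2 by norm_num,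
              Real.sqrt_sq (by norm_num : (0:ℝ) ≤ 2)]
        _ ≤ (4:ℝ) ^ ((k:ℝ)/2) := Real.rpow_le_rpow_of_exponent_le hb1 he
        _ ≤ (4 * lam) ^ ((k:ℝ)/2) := Real.rpow_le_rpow (by norm_num) hb (by positivity)
    linarith
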